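/- Let av(n) = av_{t71}(n) where t71 = N(N(L,L,L),N(L,L,L),L). Then av(0) = 0, av(1) = 1, av(2) = 0, and for all n ≥ 3, av(n) = 2·Σ_{k=1}^{n-2} av(k)·av(n-k-1) − av(n-2). -/

import Mathlib

inductive TTree : Type
  | L : TTree
  | N : TTree → TTree → TTree → TTree

namespace TTree

/-- `occursAtRoot t T` : the pattern `t` occurs at the root of `T`. -/
def occursAtRoot : TTree → TTree → Prop
  | .L, _ => True
  | .N _ _ _, .L => False
  | .N p q r, .N a b c => occursAtRoot p a ∧ occursAtRoot q b ∧ occursAtRoot r c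

/-- `contains t T` : the pattern `t` occurs at some vertex of `T`. -/
def contains (t : TTree) : TTree → Prop
  | .L => occursAtRoot t .L
  | .N a b c => occursAtRoot t (.N a b c) ∨ contains t a ∨ contains t b ∨ contains t c

/-- `T.avoids t` : the tree `T` avoids the pattern `t`. -/
def avoids (T t : TTree) : Prop := ¬ contains t T

/-- the number of leaves of a ternary tree -/
def leaves : TTree → ℕ
  | .L => 1
  | .N a b c => leaves a + leaves b + leaves c

end TTree

/-- `av t n` : the number of `n`-leaf ternary trees avoiding the pattern `t` -/
noncomputable def av (t : TTree) (n : ℕ) : ℕ :=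
  Set.ncard {T : TTree | T.leaves = n ∧ T.avoids t}

/-- the 7-leaf pattern `t71 = N(N(L,L,L),N(L,L,L),L)` -/
def t71 : TTree := .N (.N .L .L .L) (.N .L .L .L) .L

/-!
A tree avoids `t71` iff its three subtrees avoid it and its left or centre subtree is a leaf.
So an avoiding tree with `n ≥ 2` leaves is `N L b c` or `N a L c` with `a`/`b`, `c` avoiding
and `n - 1` leaves between them; each family is counted by the convolution
`∑ av k * av (n - 1 - k)`, and the two overlap exactly in the trees `N L L c`, counted by
`av (n - 2)`. Inclusion–exclusion gives the recurrence.
-/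

namespace TTree

lemma one_le_leaves : ∀ T : TTree, 1 ≤ T.leaves
  | .L => le_rfl
  | .N a _ _ => by have := one_le_leaves a; simp only [leaves]; omega

lemma eq_L_of_leaves_eq_one : ∀ T : TTree, T.leaves = 1 → T = .L
  | .L, _ => rfl
  | .N a b c, h => by
      have := one_le_leaves a; have := one_le_leaves b; have := one_le_leaves c
      simp only [leaves] at h; omega

lemma leaves_ne_two : ∀ T : TTree, T.leaves ≠ 2
  | .L => by simp [leaves]
  | .N a b c => by
      have := one_le_leaves a; have := one_le_leaves b; have := one_le_leaves c
      simp only [leaves]; omega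

lemma finite_setOf_leaves_le (n : ℕ) : {T : TTree | T.leaves ≤ n}.Finite := by
  induction n with
  | zero =>
    exact Set.finite_empty.subset fun T hT => Nat.not_succ_le_zero 0 ((one_le_leaves T).trans hT)
  | succ n ih =>
    refine (((ih.prod (ih.prod ih)).image
      fun p : TTree × TTree × TTree => N p.1 p.2.1 p.2.2).insert L).subset ?_
    rintro (_ | ⟨a, b, c⟩) hT
    · exact Set.mem_insert _ _
    · have := one_le_leaves a; have := one_le_leaves b; have := one_le_leaves c
      simp only [Set.mem_ofPred_eq, leaves] at hT
      refine Set.mem_insert_of_mem _ ⟨(a, b, c), ⟨?_, ?_, ?_⟩, rfl⟩ <;>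
        simp only [Set.mem_ofPred_eq] <;> omega

lemma L_avoids_iff {t : TTree} : L.avoids t ↔ t ≠ L := by
  cases t <;> simp [avoids, contains, occursAtRoot]

lemma L_avoids_t71 : L.avoids t71 := L_avoids_iff.2 (by simp [t71])

lemma N_avoids_t71_iff {a b c : TTree} : (N a b c).avoids t71 ↔
    a.avoids t71 ∧ b.avoids t71 ∧ c.avoids t71 ∧ (a = L ∨ b = L) := by
  cases a <;> cases b <;> simp [avoids, contains, occursAtRoot, t71]

end TTree

open TTree

section Avoiders

variable (t : TTree)

def avoiders (n : ℕ) : Set TTree := {T | T.leaves = n ∧ T.avoids t}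

lemma av_eq_ncard_avoiders (n : ℕ) : av t n = (avoiders t n).ncard := rfl

lemma av_zero : av t 0 = 0 := by
  rw [av_eq_ncard_avoiders, Set.eq_empty_of_forall_notMem (s := avoiders t 0) fun T hT =>
    Nat.one_le_iff_ne_zero.1 (one_le_leaves T) hT.1, Set.ncard_empty]

lemma av_two : av t 2 = 0 := by
  rw [av_eq_ncard_avoiders, Set.eq_empty_of_forall_notMem (s := avoiders t 2) fun T hT =>
    leaves_ne_two T hT.1, Set.ncard_empty]

lemma av_one {t : TTree} (ht : t ≠ L) : av t 1 = 1 := by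
  have : avoiders t 1 = {L} := by
    ext T
    refine ⟨fun hT => eq_L_of_leaves_eq_one T hT.1, ?_⟩
    rintro rfl
    exact ⟨rfl, L_avoids_iff.2 ht⟩
  rw [av_eq_ncard_avoiders, this, Set.ncard_singleton]

def avoiderPairs (m : ℕ) : Set (TTree × TTree) :=
  {p | p.1.avoids t ∧ p.2.avoids t ∧ p.1.leaves + p.2.leaves = m}

lemma finite_avoiderPairs (m : ℕ) : (avoiderPairs t m).Finite := by
  refine ((finite_setOf_leaves_le m).prod (finite_setOf_leaves_le m)).subset ?_
  rintro p ⟨-, -, h⟩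
  exact ⟨by simp only [Set.mem_ofPred_eq]; omega, by simp only [Set.mem_ofPred_eq]; omega⟩

lemma ncard_avoiderPairs (m : ℕ) :
    (avoiderPairs t m).ncard = ∑ k ∈ Finset.Icc 1 (m - 1), av t k * av t (m - k) := by
  classical
  have hfin := finite_avoiderPairs t m
  have hmaps : ∀ p ∈ hfin.toFinset, p.1.leaves ∈ Finset.Icc 1 (m - 1) := by
    rintro p hp
    obtain ⟨-, -, h⟩ := hfin.mem_toFinset.1 hp
    have := one_le_leaves p.1; have := one_le_leaves p.2
    rw [Finset.mem_Icc]; omega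
  rw [Set.ncard_eq_toFinset_card _ hfin, Finset.card_eq_sum_card_fiberwise hmaps]
  refine Finset.sum_congr rfl fun k hk => ?_
  have hfiber : ↑(hfin.toFinset.filter fun p => p.1.leaves = k)
      = avoiders t k ×ˢ avoiders t (m - k) := by
    ext p
    simp only [Finset.coe_filter, Set.Finite.mem_toFinset, avoiderPairs, avoiders,
      Set.mem_ofPred_eq, Set.mem_prod]
    constructor
    · rintro ⟨⟨h1, h2, h⟩, rfl⟩
      exact ⟨⟨rfl, h1⟩, by omega, h2⟩
    · rintro ⟨⟨rfl, h1⟩, h, h2⟩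
      have := Finset.mem_Icc.1 hk
      exact ⟨⟨h1, h2, by omega⟩, rfl⟩
  rw [← Set.ncard_coe_finset, hfiber, Set.ncard_prod]
  rfl

end Avoiders

def leftLeafAvoiders (m : ℕ) : Set TTree := (fun p => N L p.1 p.2) '' avoiderPairs t71 m

def centreLeafAvoiders (m : ℕ) : Set TTree := (fun p => N p.1 L p.2) '' avoiderPairs t71 m

lemma ncard_leftLeafAvoiders (m : ℕ) :
    (leftLeafAvoiders m).ncard = (avoiderPairs t71 m).ncard :=
  Set.ncard_image_of_injective _ fun p q h => by
    simp only [N.injEq] at h; exact Prod.ext h.2.1 h.2.2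

lemma ncard_centreLeafAvoiders (m : ℕ) :
    (centreLeafAvoiders m).ncard = (avoiderPairs t71 m).ncard :=
  Set.ncard_image_of_injective _ fun p q h => by
    simp only [N.injEq] at h; exact Prod.ext h.1 h.2.2

lemma avoiders_t71_eq_union {n : ℕ} (hn : 2 ≤ n) :
    avoiders t71 n = leftLeafAvoiders (n - 1) ∪ centreLeafAvoiders (n - 1) := by
  ext T
  constructor
  · rintro ⟨hl, hT⟩
    cases T with
    | L => simp only [leaves] at hl; omega
    | N a b c =>
      obtain ⟨ha, hb, hc, rfl | rfl⟩ := N_avoids_t71_iff.1 hT <;> simp only [leaves] at hl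
      · exact Or.inl ⟨(b, c), ⟨hb, hc, by dsimp only; omega⟩, rfl⟩
      · exact Or.inr ⟨(a, c), ⟨ha, hc, by dsimp only; omega⟩, rfl⟩
  · rintro (⟨p, ⟨h1, h2, h⟩, rfl⟩ | ⟨p, ⟨h1, h2, h⟩, rfl⟩)
    · exact ⟨by simp only [leaves]; omega,
        N_avoids_t71_iff.2 ⟨L_avoids_t71, h1, h2, Or.inl rfl⟩⟩
    · exact ⟨by simp only [leaves]; omega,
        N_avoids_t71_iff.2 ⟨h1, L_avoids_t71, h2, Or.inr rfl⟩⟩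

lemma leftLeafAvoiders_inter_centreLeafAvoiders (n : ℕ) :
    leftLeafAvoiders (n - 1) ∩ centreLeafAvoiders (n - 1) = N L L '' avoiders t71 (n - 2) := by
  ext T
  constructor
  · rintro ⟨⟨⟨b, c⟩, ⟨-, hc, h⟩, rfl⟩, ⟨q, -, hq⟩⟩
    obtain ⟨-, rfl, -⟩ := N.inj hq
    simp only [leaves] at h
    exact ⟨c, ⟨by omega, hc⟩, rfl⟩
  · rintro ⟨c, ⟨h, hc⟩, rfl⟩
    have := one_le_leaves c
    have hp : (L, c) ∈ avoiderPairs t71 (n - 1) :=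
      ⟨L_avoids_t71, hc, by simp only [leaves]; omega⟩
    exact ⟨⟨_, hp, rfl⟩, ⟨_, hp, rfl⟩⟩

lemma av_t71_add_av_sub_two {n : ℕ} (hn : 2 ≤ n) :
    av t71 n + av t71 (n - 2) =
      2 * ∑ k ∈ Finset.Icc 1 (n - 2), av t71 k * av t71 (n - k - 1) := by
  have hinter :
      (leftLeafAvoiders (n - 1) ∩ centreLeafAvoiders (n - 1)).ncard = av t71 (n - 2) := by
    rw [leftLeafAvoiders_inter_centreLeafAvoiders,
      Set.ncard_image_of_injective _ fun _ _ h => (N.inj h).2.2, av_eq_ncard_avoiders]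
  have hsum : (avoiderPairs t71 (n - 1)).ncard =
      ∑ k ∈ Finset.Icc 1 (n - 2), av t71 k * av t71 (n - k - 1) := by
    simp only [ncard_avoiderPairs, Nat.sub_sub, Nat.reduceAdd, Nat.sub_right_comm n 1]
  have hleft : (leftLeafAvoiders (n - 1)).Finite := (finite_avoiderPairs _ _).image _
  have hcentre : (centreLeafAvoiders (n - 1)).Finite := (finite_avoiderPairs _ _).image _
  rw [av_eq_ncard_avoiders, avoiders_t71_eq_union hn, ← hinter,
    Set.ncard_union_add_ncard_inter _ _ hleft hcentre,
    ncard_leftLeafAvoiders, ncard_centreLeafAvoiders, hsum, two_mul]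

/-- Recurrence for the avoidance sequence of `t71`. -/
theorem av_t71_recurrence :
    av t71 0 = 0 ∧ av t71 1 = 1 ∧ av t71 2 = 0 ∧
    ∀ n : ℕ, 3 ≤ n →
      (av t71 n : ℤ) =
        2 * ∑ k ∈ Finset.Icc 1 (n - 2), (av t71 k : ℤ) * (av t71 (n - k - 1) : ℤ)
          - (av t71 (n - 2) : ℤ) := by
  refine ⟨av_zero t71, av_one (by simp [t71]), av_two t71, fun n hn => ?_⟩
  have := congrArg (Nat.cast : ℕ → ℤ) (av_t71_add_av_sub_two (n := n) (by omega))
  push_cast at this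
  linarith
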